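/- For elements a, b, w of a finite Coxeter group W: a ≤ a w and a w ≤ b (in absolute order) holds if and only if a ≤ b w^{-1} and b w^{-1} ≤ b. -/

import Mathlib

/-!
Reflection length is subadditive, so each side of the equivalence is a pair of triangle
inequalities holding with equality, i.e. both sides say `l_T(a) + l_T(w) + l_T(w⁻¹a⁻¹b) = l_T(b)`.
For the right-hand side this uses that `a⁻¹bw⁻¹` and `w⁻¹a⁻¹b` are conjugate, and `l_T` is a
class function because the set of reflections is closed under conjugation.
-/

open CoxeterSystem

/-- The reflection length `l_T` of an element of a Coxeter group: the least `k` such that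
`w` is a product of `k` reflections. -/
noncomputable def reflLen {B W : Type*} [Group W] {M : CoxeterMatrix B}
    (cs : CoxeterSystem M W) (w : W) : ℕ :=
  sInf {k | ∃ l : List W, l.length = k ∧ (∀ t ∈ l, cs.IsReflection t) ∧ l.prod = w}

/-- The absolute order on a Coxeter group: `u ≤ v` iff `l_T(u) + l_T(u⁻¹v) = l_T(v)`. -/
def absLe {B W : Type*} [Group W] {M : CoxeterMatrix B}
    (cs : CoxeterSystem M W) (u v : W) : Prop :=
  reflLen cs u + reflLen cs (u⁻¹ * v) = reflLen cs v

section reflLen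

variable {B W : Type*} [Group W] {M : CoxeterMatrix B} (cs : CoxeterSystem M W)

lemma exists_reflections_length_eq_reflLen (w : W) :
    ∃ l : List W, l.length = reflLen cs w ∧ (∀ t ∈ l, cs.IsReflection t) ∧ l.prod = w := by
  refine Nat.sInf_mem (s := {k | ∃ l : List W, l.length = k ∧ (∀ t ∈ l, cs.IsReflection t) ∧
    l.prod = w}) ?_
  obtain ⟨ω, rfl⟩ := cs.wordProd_surjective w
  refine ⟨_, ω.map cs.simple, rfl, ?_, rfl⟩
  simp only [List.mem_map]
  rintro _ ⟨i, -, rfl⟩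
  exact cs.isReflection_simple i

lemma reflLen_le_length {w : W} {l : List W} (hl : ∀ t ∈ l, cs.IsReflection t)
    (hw : l.prod = w) : reflLen cs w ≤ l.length :=
  Nat.sInf_le ⟨l, rfl, hl, hw⟩

lemma reflLen_mul_le (u v : W) : reflLen cs (u * v) ≤ reflLen cs u + reflLen cs v := by
  obtain ⟨l, hl, hlT, rfl⟩ := exists_reflections_length_eq_reflLen cs u
  obtain ⟨m, hm, hmT, rfl⟩ := exists_reflections_length_eq_reflLen cs v
  rw [← hl, ← hm, ← List.length_append]
  refine reflLen_le_length cs (fun t ht => ?_) List.prod_append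
  rcases List.mem_append.mp ht with ht | ht
  exacts [hlT t ht, hmT t ht]

lemma reflLen_conj_le (x w : W) : reflLen cs (x * w * x⁻¹) ≤ reflLen cs w := by
  obtain ⟨l, hl, hlT, rfl⟩ := exists_reflections_length_eq_reflLen cs w
  rw [← hl, ← List.length_map (f := MulAut.conj x)]
  refine reflLen_le_length cs ?_ (map_list_prod (MulAut.conj x) l).symm
  simp only [List.mem_map]
  rintro _ ⟨t, ht, rfl⟩
  exact (hlT t ht).conj x

lemma reflLen_mul_comm (u v : W) : reflLen cs (u * v) = reflLen cs (v * u) := by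
  have key : ∀ u v : W, reflLen cs (v * u) ≤ reflLen cs (u * v) := fun u v => by
    simpa [mul_assoc] using reflLen_conj_le cs u⁻¹ (u * v)
  exact le_antisymm (key v u) (key u v)

lemma absLe_and_absLe_iff (u v x : W) :
    absLe cs u v ∧ absLe cs v x ↔
      reflLen cs u + reflLen cs (u⁻¹ * v) + reflLen cs (v⁻¹ * x) = reflLen cs x := by
  have huv := reflLen_mul_le cs u (u⁻¹ * v)
  have hvx := reflLen_mul_le cs v (v⁻¹ * x)
  simp only [mul_inv_cancel_left] at huv hvx
  unfold absLe
  omega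

end reflLen

theorem absLe_mul_iff_right_general {B W : Type*} [Group W] {M : CoxeterMatrix B}
    (cs : CoxeterSystem M W) (a b w : W) :
    (absLe cs a (a * w) ∧ absLe cs (a * w) b) ↔
      (absLe cs a (b * w⁻¹) ∧ absLe cs (b * w⁻¹) b) := by
  have hw : (b * w⁻¹)⁻¹ * b = w := by group
  have hcyc : reflLen cs (a⁻¹ * (b * w⁻¹)) = reflLen cs ((a * w)⁻¹ * b) := by
    rw [← mul_assoc, reflLen_mul_comm, mul_inv_rev, mul_assoc]
  rw [absLe_and_absLe_iff, absLe_and_absLe_iff, inv_mul_cancel_left, hw, hcyc, add_right_comm]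

/-- `a ≤ aw ≤ b` if and only if `a ≤ bw⁻¹ ≤ b` in absolute order. -/
theorem absLe_mul_iff_right {B W : Type*} [Group W] [Finite W] {M : CoxeterMatrix B}
    (cs : CoxeterSystem M W) (a b w : W) :
    (absLe cs a (a * w) ∧ absLe cs (a * w) b) ↔
      (absLe cs a (b * w⁻¹) ∧ absLe cs (b * w⁻¹) b) :=
  absLe_mul_iff_right_general cs a b w
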